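/- Fix real parameters γ, α with γ > 1 and α > 0, real constants ã₁₂, ã₁₄, and let P = diag(α², (γ−1)/2, (γ−1)/2, 1). For Φ = (φ₁,φ₂,φ₃,φ₄) ∈ ℝ⁴ with φ₁ ≠ 0 set u = φ₂/φ₁, v = φ₃/φ₁ and define the 4×4 matrices A(Φ) = (1/2)·[[u,1,0,0],[−u², 3u, 0, 4φ₄/φ₁],[−uv, v, 2u, 0],[−γu φ₄/φ₁, γ φ₄/φ₁, 0, 2u]] and Ã(Φ) = [[α²u, ã₁₂φ₂, 0, ã₁₄φ₄],[−2ã₁₂φ₂, ã₁₂φ₁ + ((γ−1)/2)u, 0, 0],[0, 0, ((γ−1)/2)u, 0],[−2ã₁₄φ₄, 2(γ−1)φ₄/φ₁, 0, ã₁₄φ₁ + (2−γ)u]]. Then for every differentiable function Φ : ℝ → ℝ⁴ with φ₁(x) ≠ 0 for all x, the identity (d/dx)( Ã(Φ(x)) Φ(x) ) + Ã(Φ(x))ᵀ Φ'(x) = 2 P A(Φ(x)) Φ'(x) holds for all x. -/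

import Mathlib

open Matrix

/-- The diagonal norm matrix `P = diag(α², (γ−1)/2, (γ−1)/2, 1)`. -/
noncomputable def normP (γ α : ℝ) : Matrix (Fin 4) (Fin 4) ℝ :=
  Matrix.diagonal ![α ^ 2, (γ - 1) / 2, (γ - 1) / 2, 1]

/-- The `x`-direction coefficient matrix `A(Φ)` of the transformed Euler equations. -/
noncomputable def matA (γ : ℝ) (φ : Fin 4 → ℝ) : Matrix (Fin 4) (Fin 4) ℝ :=
  let u := φ 1 / φ 0
  let v := φ 2 / φ 0
  let q := φ 3 / φ 0
  (1 / 2 : ℝ) • !![u, 1, 0, 0;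
                   -u ^ 2, 3 * u, 0, 4 * q;
                   -(u * v), v, 2 * u, 0;
                   -(γ * u * q), γ * q, 0, 2 * u]

/-- The derived matrix `Ã(Φ)` (with free parameters `ã₁₂, ã₁₄`). -/
noncomputable def matAtil (γ α a12 a14 : ℝ) (φ : Fin 4 → ℝ) : Matrix (Fin 4) (Fin 4) ℝ :=
  let u := φ 1 / φ 0
  let q := φ 3 / φ 0
  !![α ^ 2 * u, a12 * φ 1, 0, a14 * φ 3;
     -(2 * a12 * φ 1), a12 * φ 0 + (γ - 1) / 2 * u, 0, 0;
     0, 0, (γ - 1) / 2 * u, 0;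
     -(2 * a14 * φ 3), 2 * (γ - 1) * q, 0, a14 * φ 0 + (2 - γ) * u]

/-!
Where `φ₁ ≠ 0`, the vector `Ã(Φ) Φ` agrees with the explicit rational function `fluxTil Φ`, so the
quotient rule gives `(Ã(Φ) Φ)ₓ = fluxTilDeriv Φ Φₓ`. The relation then becomes, for each fixed `Φ`,
an identity linear in `Φₓ`, which holds entry by entry after clearing the denominators `φ₁`.
-/

noncomputable def fluxTil (γ α a12 a14 : ℝ) (φ : Fin 4 → ℝ) : Fin 4 → ℝ :=
  ![α ^ 2 * φ 1 + a12 * φ 1 ^ 2 + a14 * φ 3 ^ 2,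
    -(a12 * (φ 0 * φ 1)) + (γ - 1) / 2 * (φ 1 ^ 2 / φ 0),
    (γ - 1) / 2 * (φ 1 * φ 2 / φ 0),
    -(a14 * (φ 0 * φ 3)) + γ * (φ 1 * φ 3 / φ 0)]

noncomputable def fluxTilDeriv (γ α a12 a14 : ℝ) (φ dφ : Fin 4 → ℝ) : Fin 4 → ℝ :=
  let u := φ 1 / φ 0
  let v := φ 2 / φ 0
  let q := φ 3 / φ 0
  ![(α ^ 2 + 2 * a12 * φ 1) * dφ 1 + 2 * a14 * φ 3 * dφ 3,
    -(a12 * (φ 1 * dφ 0 + φ 0 * dφ 1)) + (γ - 1) / 2 * (2 * u * dφ 1 - u ^ 2 * dφ 0),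
    (γ - 1) / 2 * (v * dφ 1 + u * dφ 2 - u * v * dφ 0),
    -(a14 * (φ 3 * dφ 0 + φ 0 * dφ 3)) + γ * (q * dφ 1 + u * dφ 3 - u * q * dφ 0)]

theorem matAtil_mulVec_self (γ α a12 a14 : ℝ) {φ : Fin 4 → ℝ} (hφ : φ 0 ≠ 0) :
    matAtil γ α a12 a14 φ *ᵥ φ = fluxTil γ α a12 a14 φ := by
  ext i
  fin_cases i <;>
    simp only [matAtil, fluxTil, mulVec, dotProduct, Fin.sum_univ_four, of_apply, cons_val',
      cons_val_fin_one, cons_val_zero, cons_val_one, cons_val, Fin.isValue, Fin.zero_eta, Fin.mk_one,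
      Fin.reduceFinMk] <;>
    field_simp <;> ring

theorem hasDerivAt_fluxTil (γ α a12 a14 : ℝ) {Φ : ℝ → Fin 4 → ℝ} {Φ' : Fin 4 → ℝ} {x : ℝ}
    (hΦ : HasDerivAt Φ Φ' x) (hx : Φ x 0 ≠ 0) :
    HasDerivAt (fun s => fluxTil γ α a12 a14 (Φ s)) (fluxTilDeriv γ α a12 a14 (Φ x) Φ') x := by
  have h : ∀ i, HasDerivAt (fun s => Φ s i) (Φ' i) x := hasDerivAt_pi.1 hΦ
  refine hasDerivAt_pi.2 fun i => ?_
  fin_cases i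
  · show HasDerivAt (fun s => α ^ 2 * Φ s 1 + a12 * Φ s 1 ^ 2 + a14 * Φ s 3 ^ 2) _ x
    refine (((h 1).const_mul (α ^ 2)).add (((h 1).pow 2).const_mul a12)
      |>.add (((h 3).pow 2).const_mul a14)).congr_deriv ?_
    dsimp [fluxTilDeriv]; ring
  · show HasDerivAt (fun s => -(a12 * (Φ s 0 * Φ s 1)) + (γ - 1) / 2 * (Φ s 1 ^ 2 / Φ s 0)) _ x
    refine ((((h 0).mul (h 1)).const_mul a12).neg.add
      ((((h 1).pow 2).div (h 0) hx).const_mul ((γ - 1) / 2))).congr_deriv ?_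
    dsimp [fluxTilDeriv]; field_simp
  · show HasDerivAt (fun s => (γ - 1) / 2 * (Φ s 1 * Φ s 2 / Φ s 0)) _ x
    refine ((((h 1).mul (h 2)).div (h 0) hx).const_mul ((γ - 1) / 2)).congr_deriv ?_
    dsimp [fluxTilDeriv]; field_simp
  · show HasDerivAt (fun s => -(a14 * (Φ s 0 * Φ s 3)) + γ * (Φ s 1 * Φ s 3 / Φ s 0)) _ x
    refine ((((h 0).mul (h 3)).const_mul a14).neg.add
      ((((h 1).mul (h 3)).div (h 0) hx).const_mul γ)).congr_deriv ?_
    dsimp [fluxTilDeriv]; field_simp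

theorem fluxTilDeriv_add_transpose_mulVec (γ α a12 a14 : ℝ) {φ : Fin 4 → ℝ} (hφ : φ 0 ≠ 0)
    (dφ : Fin 4 → ℝ) :
    fluxTilDeriv γ α a12 a14 φ dφ + (matAtil γ α a12 a14 φ)ᵀ *ᵥ dφ
      = (2 : ℝ) • ((normP γ α * matA γ φ) *ᵥ dφ) := by
  ext i
  fin_cases i <;>
    simp only [fluxTilDeriv, matAtil, matA, normP, Pi.add_apply, Pi.smul_apply, mulVec, dotProduct,
      Fin.sum_univ_four, transpose_apply, mul_apply, diagonal_apply_eq, diagonal_apply_ne, ne_eq,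
      Fin.reduceEq, not_false_eq_true, smul_of, smul_cons, smul_eq_mul, smul_empty, of_apply, cons_val',
      cons_val_fin_one, cons_val_zero, cons_val_one, cons_val, Fin.isValue, Fin.zero_eta, Fin.mk_one,
      Fin.reduceFinMk] <;>
    field_simp <;> ring

theorem stmt_4 (γ α a12 a14 : ℝ)
    (Φ : ℝ → Fin 4 → ℝ) (hΦ : Differentiable ℝ Φ) (hφ1 : ∀ x, Φ x 0 ≠ 0) :
    ∀ x, deriv (fun s => (matAtil γ α a12 a14 (Φ s)).mulVec (Φ s)) x
        + (matAtil γ α a12 a14 (Φ x))ᵀ.mulVec (deriv Φ x)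
      = (2 : ℝ) • ((normP γ α * matA γ (Φ x)).mulVec (deriv Φ x)) := by
  intro x
  have hflux : (fun s => matAtil γ α a12 a14 (Φ s) *ᵥ Φ s) = fun s => fluxTil γ α a12 a14 (Φ s) :=
    funext fun s => matAtil_mulVec_self γ α a12 a14 (hφ1 s)
  rw [hflux, (hasDerivAt_fluxTil γ α a12 a14 (hΦ x).hasDerivAt (hφ1 x)).deriv]
  exact fluxTilDeriv_add_transpose_mulVec γ α a12 a14 (hφ1 x) _
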